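/- arXiv:2112.05815 — 3 statements merged into one kernel-verified Lean document; each statement's English description precedes it below -/
import Mathlib

section
/- Let X_j be a random vector in ℝ^k with δ_j^4 = E‖X_j‖^4 < ∞, let θ_j ∈ ℝ, and let Y_j = X_j·1{‖θ_j X_j‖ ≤ 1}. Then for all coordinate indices i, l ∈ {1,…,k}, θ_j²·|E(X_{ji}X_{jl}) − E(Y_{ji}Y_{jl})| ≤ θ_j^4·δ_j^4. -/
/-! The difference `X_i X_l - Y_i Y_l` vanishes where `‖θ X‖ ≤ 1`; elsewhere `θ² ‖X‖² > 1`,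
so it is bounded by `‖X‖² ≤ θ² ‖X‖⁴`. Integrating this pointwise bound gives the claim, the
second moments being finite because the fourth one is. -/

open MeasureTheory ProbabilityTheory Real
open scoped BigOperators

/-- Truncation `Y = X·1{‖c X‖ ≤ 1}`. -/
noncomputable def truncV {Ω : Type*} {k : ℕ} (X : Ω → EuclideanSpace ℝ (Fin k)) (c : ℝ) :
    Ω → EuclideanSpace ℝ (Fin k) :=
  fun ω => if ‖c • X ω‖ ≤ 1 then X ω else 0

section Euclidean

variable {ι : Type*} [Fintype ι]

lemma abs_apply_mul_apply_le_norm_sq (x : EuclideanSpace ℝ ι) (i l : ι) :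
    |x i * x l| ≤ ‖x‖ ^ 2 := by
  rw [abs_mul, sq, ← Real.norm_eq_abs, ← Real.norm_eq_abs]
  exact mul_le_mul (PiLp.norm_apply_le x i) (PiLp.norm_apply_le x l) (norm_nonneg _)
    (norm_nonneg _)

lemma integrable_apply_mul_apply {Ω : Type*} [MeasurableSpace Ω] {μ : Measure Ω}
    {Y : Ω → EuclideanSpace ℝ ι} (hY : AEStronglyMeasurable Y μ) {g : Ω → ℝ}
    (hg : Integrable g μ) (hYg : ∀ᵐ ω ∂μ, ‖Y ω‖ ^ 2 ≤ g ω) (i l : ι) :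
    Integrable (fun ω => Y ω i * Y ω l) μ := by
  have hcoord (j : ι) : AEStronglyMeasurable (fun ω => Y ω j) μ :=
    (EuclideanSpace.proj j).continuous.comp_aestronglyMeasurable hY
  refine hg.mono' ((hcoord i).mul (hcoord l)) ?_
  filter_upwards [hYg] with ω hω
  exact (Real.norm_eq_abs _ ▸ abs_apply_mul_apply_le_norm_sq (Y ω) i l).trans hω

end Euclidean

section Truncation

variable {Ω : Type*} {k : ℕ} (X : Ω → EuclideanSpace ℝ (Fin k)) (c : ℝ)

lemma measurable_truncV [MeasurableSpace Ω] (hX : Measurable X) : Measurable (truncV X c) :=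
  Measurable.ite (measurableSet_le (hX.const_smul c).norm measurable_const) hX measurable_const

lemma norm_truncV_le (ω : Ω) : ‖truncV X c ω‖ ≤ ‖X ω‖ := by
  unfold truncV
  split_ifs <;> simp

lemma abs_mul_sub_truncV_mul_le (ω : Ω) (i l : Fin k) :
    |X ω i * X ω l - truncV X c ω i * truncV X c ω l| ≤ c ^ 2 * ‖X ω‖ ^ 4 := by
  unfold truncV
  split_ifs with hsmall
  · simp only [sub_self, abs_zero]
    positivity
  · simp only [PiLp.zero_apply, mul_zero, sub_zero]
    have hlarge : 1 < c ^ 2 * ‖X ω‖ ^ 2 := by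
      rw [← sq_abs c, ← mul_pow, ← Real.norm_eq_abs, ← norm_smul]
      exact one_lt_pow₀ (not_le.mp hsmall) two_ne_zero
    calc |X ω i * X ω l| ≤ ‖X ω‖ ^ 2 := abs_apply_mul_apply_le_norm_sq (X ω) i l
      _ ≤ c ^ 2 * ‖X ω‖ ^ 4 := by nlinarith [sq_nonneg ‖X ω‖]

end Truncation

/-- second mixed moments of the truncated vector are close to those of
the original vector: `θ² |E X_i X_l − E Y_i Y_l| ≤ θ^4 δ^4`. -/
theorem second_moment_truncation_bound
    {Ω : Type*} [MeasurableSpace Ω] {μ : Measure Ω} [IsProbabilityMeasure μ]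
    {k : ℕ} (X : Ω → EuclideanSpace ℝ (Fin k))
    (hmeas : Measurable X)
    (hmom : Integrable (fun ω => ‖X ω‖ ^ 4) μ)
    (θ : ℝ) :
    ∀ i l : Fin k,
      θ ^ 2 * |(∫ ω, X ω i * X ω l ∂μ) - ∫ ω, truncV X θ ω i * truncV X θ ω l ∂μ| ≤
        θ ^ 4 * ∫ ω, ‖X ω‖ ^ 4 ∂μ := by
  intro i l
  have hsecond : Integrable (fun ω => ‖X ω‖ ^ 2) μ :=
    integrable_norm_pow_of_le hmeas.aestronglyMeasurable (by norm_num) hmom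
  have hXX := integrable_apply_mul_apply hmeas.aestronglyMeasurable hsecond
    (.of_forall fun _ => le_rfl) i l
  have hYY := integrable_apply_mul_apply (measurable_truncV X θ hmeas).aestronglyMeasurable
    hsecond (.of_forall fun ω => pow_le_pow_left₀ (norm_nonneg _) (norm_truncV_le X θ ω) 2) i l
  calc θ ^ 2 * |(∫ ω, X ω i * X ω l ∂μ) - ∫ ω, truncV X θ ω i * truncV X θ ω l ∂μ|
      = θ ^ 2 * ‖∫ ω, (X ω i * X ω l - truncV X θ ω i * truncV X θ ω l) ∂μ‖ := by
        rw [integral_sub hXX hYY, Real.norm_eq_abs]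
    _ ≤ θ ^ 2 * ∫ ω, θ ^ 2 * ‖X ω‖ ^ 4 ∂μ := by
        gcongr
        exact norm_integral_le_of_norm_le (hmom.const_mul _)
          (.of_forall fun ω => abs_mul_sub_truncV_mul_le X θ ω i l)
    _ = θ ^ 4 * ∫ ω, ‖X ω‖ ^ 4 ∂μ := by
        rw [integral_const_mul]
        ring
end

section
/- Let X″ be a nonnegative random variable with E X″ = 1 and E(X″)² ≤ 2δ^4 for some δ^4 ≥ 1 satisfying E[X″·1{X″ ≤ 10δ^4}] ≥ 4/5. Then there exists an absolute constant c̄ > 0 such that for every τ > 0, E min{τ·X″, 1} ≥ c̄·min{τ, 1/δ^4}. -/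
open MeasureTheory ProbabilityTheory Real

/-!
On `{X ≤ M}` we have `τ' X ≤ min (τ X) 1` for `τ' = min τ M⁻¹`, so
`E min (τ X) 1 ≥ τ' · E[X; X ≤ M]`. With `M = 10 δ⁴` the truncated mean is at least `4/5`
and `τ' ≥ min τ (1/δ⁴) / 10`, giving the constant `2/25`.
-/

lemma min_inv_mul_truncation_le_min_mul_one {τ M y : ℝ} (hτ : 0 ≤ τ) (hM : 0 < M) (hy : 0 ≤ y) :
    min τ M⁻¹ * (if y ≤ M then y else 0) ≤ min (τ * y) 1 := by
  split_ifs with hyM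
  · refine le_min (mul_le_mul_of_nonneg_right (min_le_left _ _) hy) ?_
    calc min τ M⁻¹ * y ≤ M⁻¹ * M := mul_le_mul (min_le_right _ _) hyM hy (by positivity)
      _ = 1 := inv_mul_cancel₀ hM.ne'
  · rw [mul_zero]
    exact le_min (mul_nonneg hτ hy) zero_le_one

lemma min_inv_mul_integral_truncation_le {Ω : Type*} [MeasurableSpace Ω] {μ : Measure Ω}
    [IsFiniteMeasure μ] {Y : Ω → ℝ} {τ M : ℝ} (hY : AEStronglyMeasurable Y μ)
    (hY0 : 0 ≤ᵐ[μ] Y) (hτ : 0 ≤ τ) (hM : 0 < M) :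
    min τ M⁻¹ * ∫ ω, (if Y ω ≤ M then Y ω else 0) ∂μ ≤ ∫ ω, min (τ * Y ω) 1 ∂μ := by
  have hmin_int : Integrable (fun ω => min (τ * Y ω) 1) μ := by
    refine Integrable.of_bound (by fun_prop) 1 (hY0.mono fun ω hω => ?_)
    rw [Real.norm_eq_abs, abs_of_nonneg (le_min (mul_nonneg hτ hω) zero_le_one)]
    exact min_le_right _ _
  rw [← integral_const_mul]
  refine integral_mono_of_nonneg (hY0.mono fun ω hω => ?_) hmin_int
    (hY0.mono fun ω hω => min_inv_mul_truncation_le_min_mul_one hτ hM hω)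
  have htrunc_nonneg : 0 ≤ if Y ω ≤ M then Y ω else 0 := by split_ifs; exacts [hω, le_rfl]
  exact mul_nonneg (le_min hτ (inv_nonneg.mpr hM.le)) htrunc_nonneg

lemma min_inv_div_le_min_inv_mul {τ δ k : ℝ} (hτ : 0 ≤ τ) (hδ : 0 < δ) (hk : 1 ≤ k) :
    min τ δ⁻¹ / k ≤ min τ (k * δ)⁻¹ := by
  refine le_min ((div_le_self (le_min hτ (inv_nonneg.mpr hδ.le)) hk).trans (min_le_left _ _)) ?_
  calc min τ δ⁻¹ / k ≤ δ⁻¹ / k := by gcongr; exact min_le_right _ _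
    _ = (k * δ)⁻¹ := by rw [mul_inv, div_eq_mul_inv, mul_comm]

/-- a lower bound on `E min{τX″, 1}` for a nonnegative random variable
with unit mean, bounded second moment and non-degenerate truncated first moment. -/
theorem expectation_min_lower_bound :
    ∃ c : ℝ, 0 < c ∧
      ∀ (Ω : Type) [MeasurableSpace Ω] (μ : Measure Ω), IsProbabilityMeasure μ →
      ∀ (Y : Ω → ℝ) (δ4 : ℝ),
        Measurable Y →
        (∀ ω, 0 ≤ Y ω) →
        Integrable Y μ →
        Integrable (fun ω => Y ω ^ 2) μ →
        (∫ ω, Y ω ∂μ = 1) →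
        (∫ ω, Y ω ^ 2 ∂μ ≤ 2 * δ4) →
        1 ≤ δ4 →
        (4 / 5 ≤ ∫ ω, (if Y ω ≤ 10 * δ4 then Y ω else 0) ∂μ) →
        ∀ τ : ℝ, 0 < τ →
          c * min τ (1 / δ4) ≤ ∫ ω, min (τ * Y ω) 1 ∂μ := by
  refine ⟨2 / 25, by norm_num, ?_⟩
  intro Ω _ μ _ Y δ4 hY hY0 _ _ _ _ hδ hTrunc τ hτ
  have hδ0 : 0 < δ4 := by linarith
  have hscale := min_inv_div_le_min_inv_mul hτ.le hδ0 (by norm_num : (1 : ℝ) ≤ 10)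
  calc 2 / 25 * min τ (1 / δ4) = min τ δ4⁻¹ / 10 * (4 / 5) := by rw [one_div]; ring
    _ ≤ min τ (10 * δ4)⁻¹ * ∫ ω, (if Y ω ≤ 10 * δ4 then Y ω else 0) ∂μ :=
      mul_le_mul hscale hTrunc (by norm_num) (le_min hτ.le (by positivity))
    _ ≤ ∫ ω, min (τ * Y ω) 1 ∂μ :=
      min_inv_mul_integral_truncation_le hY.aestronglyMeasurable (ae_of_all _ hY0) hτ.le
        (by positivity)
end

section
/- Let Θ = (Θ_1,…,Θ_n) be uniformly distributed on the unit sphere S^{n−1}, let δ_1^4,…,δ_n^4 be positive reals, and set δ^4 = (1/n)Σ_{j=1}^n δ_j^4. Then there exist absolute constants C₄, c₄ > 0 such that for every t > 0, P(Σ_{j=1}^n δ_j^4·Θ_j^4 ≥ t·δ^4/n) ≤ C₄·exp(−c₄·√t). -/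
/-!
Polar decomposition of the Gaussian integral `∫ x_i^{2m} e^{-‖x‖²/2} dx` over `ℝⁿ`, compared with
its product form, gives the coordinate moments of the uniform measure on the sphere:
`E θ_i^{2m} = ∏_{k<m} (1+2k)/(n+2k) ≤ (2m/n)^m`. After normalising the weights `δ_j⁴` to sum to
one, Jensen's inequality bounds the `k`-th moment of `Σ_j w_j θ_j⁴` by `(4k/n)^{2k}`, Markov's
inequality gives the tail bound `(16k²/t)^k`, and `k = ⌊√t/12⌋` makes this at most `e^{2-√t/6}`.
-/

open MeasureTheory ProbabilityTheory Real
open scoped ENNReal BigOperators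

/-- The normalized uniform (Lebesgue) measure on the unit sphere `S^{n-1} ⊆ ℝ^n`. -/
noncomputable def uniformSphere (n : ℕ) :
    Measure (Metric.sphere (0 : EuclideanSpace ℝ (Fin n)) 1) :=
  (((volume : Measure (EuclideanSpace ℝ (Fin n))).toSphere Set.univ)⁻¹ •
    (volume : Measure (EuclideanSpace ℝ (Fin n))).toSphere)

open Set Metric Finset

noncomputable def gaussianRadialMoment (q : ℕ) : ℝ :=
  ∫ r in Ioi (0 : ℝ), r ^ q * exp (-r ^ 2 / 2)

theorem gaussianRadialMoment_eq_Gamma (q : ℕ) :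
    gaussianRadialMoment q = 2 ^ (((q : ℝ) + 1) / 2) / 2 * Gamma ((q + 1) / 2) := by
  have h := integral_rpow_mul_exp_neg_mul_rpow (p := 2) (q := q) (b := 1 / 2)
    two_pos (by linarith [q.cast_nonneg (α := ℝ)]) (by norm_num)
  rw [one_div, inv_rpow zero_le_two, ← rpow_neg zero_le_two, neg_div, neg_neg] at h
  rw [div_eq_mul_inv _ (2 : ℝ), ← h, gaussianRadialMoment]
  refine setIntegral_congr_fun measurableSet_Ioi fun r _ => ?_
  rw [rpow_natCast, rpow_two]
  ring_nf

theorem gaussianRadialMoment_pos (q : ℕ) : 0 < gaussianRadialMoment q := by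
  rw [gaussianRadialMoment_eq_Gamma]
  have := Gamma_pos_of_pos (s := ((q : ℝ) + 1) / 2) (by positivity)
  positivity

theorem gaussianRadialMoment_add_two (q : ℕ) :
    gaussianRadialMoment (q + 2) = (q + 1) * gaussianRadialMoment q := by
  rw [gaussianRadialMoment_eq_Gamma, gaussianRadialMoment_eq_Gamma]
  have h : (((q + 2 : ℕ) : ℝ) + 1) / 2 = ((q : ℝ) + 1) / 2 + 1 := by push_cast; ring
  rw [h, Gamma_add_one (by positivity), rpow_add_one two_pos.ne']
  ring

theorem gaussianRadialMoment_add_two_mul (q m : ℕ) :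
    gaussianRadialMoment (q + 2 * m) =
      (∏ j ∈ range m, ((q : ℝ) + 1 + 2 * j)) * gaussianRadialMoment q := by
  induction m with
  | zero => simp
  | succ m ih =>
    rw [show q + 2 * (m + 1) = q + 2 * m + 2 by ring, gaussianRadialMoment_add_two, ih,
      prod_range_succ]
    push_cast
    ring

theorem integral_pow_mul_exp_neg_sq_div_two (m : ℕ) :
    ∫ s : ℝ, s ^ (2 * m) * exp (-s ^ 2 / 2) = 2 * gaussianRadialMoment (2 * m) := by
  rw [gaussianRadialMoment, ← integral_comp_abs (f := fun s => s ^ (2 * m) * exp (-s ^ 2 / 2))]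
  simp only [pow_mul, sq_abs]

theorem EuclideanSpace.integral_coord_pow_mul_exp_neg_norm_sq {ι : Type*} [Fintype ι]
    [DecidableEq ι] (i : ι) (m : ℕ) :
    ∫ x : EuclideanSpace ℝ ι, x i ^ (2 * m) * exp (-‖x‖ ^ 2 / 2) =
      (∏ k ∈ range m, (1 + 2 * k : ℝ)) * (2 * gaussianRadialMoment 0) ^ Fintype.card ι := by
  set e : ι → ℕ := fun j => if j = i then m else 0
  have hfactor : ∀ x : EuclideanSpace ℝ ι, x i ^ (2 * m) * exp (-‖x‖ ^ 2 / 2) =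
      ∏ j, x j ^ (2 * e j) * exp (-x j ^ 2 / 2) := by
    intro x
    rw [prod_mul_distrib, ← exp_sum, EuclideanSpace.real_norm_sq_eq, ← sum_div, ← sum_neg_distrib]
    simp [e]
  have hcoord : ∀ j, ∫ s : ℝ, s ^ (2 * e j) * exp (-s ^ 2 / 2) =
      (∏ k ∈ range (e j), (1 + 2 * k : ℝ)) * (2 * gaussianRadialMoment 0) := by
    intro j
    rw [integral_pow_mul_exp_neg_sq_div_two, ← zero_add (2 * e j),
      gaussianRadialMoment_add_two_mul, Nat.cast_zero, zero_add]
    ring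
  simp_rw [hfactor]
  rw [← (PiLp.volume_preserving_toLp ι).integral_comp
    (MeasurableEquiv.toLp 2 (ι → ℝ)).measurableEmbedding]
  rw [volume_pi, integral_fintype_prod_eq_prod (fun j s => s ^ (2 * e j) * exp (-s ^ 2 / 2))]
  simp only [hcoord]
  rw [prod_mul_distrib, prod_const, card_univ, Fintype.prod_eq_single i fun j hj => by simp [e, hj]]
  simp [e]

section Polar

variable {E : Type*} [NormedAddCommGroup E] [NormedSpace ℝ E] [FiniteDimensional ℝ E]
  [Nontrivial E] [MeasurableSpace E] [BorelSpace E] (μ : Measure E) [μ.IsAddHaarMeasure]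

theorem integral_homogeneous_mul_fun_norm {f : E → ℝ} {k : ℕ}
    (hf : ∀ (r : ℝ) (x : E), 0 < r → f (r • x) = r ^ k * f x) (g : ℝ → ℝ) :
    ∫ x, f x * g ‖x‖ ∂μ =
      (∫ θ, f θ ∂μ.toSphere) * ∫ r in Ioi (0 : ℝ), r ^ (Module.finrank ℝ E - 1 + k) * g r := by
  calc ∫ x, f x * g ‖x‖ ∂μ
      = ∫ x : ({0}ᶜ : Set E), f x * g ‖(x : E)‖ ∂μ.comap (↑) := by
        rw [integral_subtype_comap (measurableSet_singleton _).compl fun x => f x * g ‖x‖,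
          restrict_compl_singleton]
    _ = ∫ p : sphere (0 : E) 1 × Ioi (0 : ℝ), f p.1 * (p.2 ^ k * g p.2)
          ∂μ.toSphere.prod (.volumeIoiPow (Module.finrank ℝ E - 1)) := by
        rw [← μ.measurePreserving_homeomorphUnitSphereProd.integral_comp
          (Homeomorph.measurableEmbedding _)]
        congr 1 with ⟨x, hx⟩
        have hx : 0 < ‖x‖ := norm_pos_iff.2 hx
        simp only [homeomorphUnitSphereProd_apply_fst_coe, homeomorphUnitSphereProd_apply_snd_coe]
        rw [mul_left_comm, ← mul_assoc, ← hf _ _ hx, smul_inv_smul₀ hx.ne']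
    _ = (∫ θ, f θ ∂μ.toSphere) * ∫ r : Ioi (0 : ℝ), r ^ k * g r
          ∂.volumeIoiPow (Module.finrank ℝ E - 1) :=
        integral_prod_mul (fun θ : sphere (0 : E) 1 => f θ) fun r : Ioi (0 : ℝ) => r ^ k * g r
    _ = _ := by
        simp only [Measure.volumeIoiPow, ENNReal.ofReal]
        rw [integral_withDensity_eq_integral_smul
            (measurable_subtype_coe.pow_const _).real_toNNReal,
          integral_subtype_comap measurableSet_Ioi
            fun r => Real.toNNReal (r ^ (Module.finrank ℝ E - 1)) • (r ^ k * g r)]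
        congr 1
        refine setIntegral_congr_fun measurableSet_Ioi fun r hr => ?_
        rw [NNReal.smul_def, Real.coe_toNNReal _ (pow_nonneg (le_of_lt hr) _), smul_eq_mul, pow_add]
        ring

end Polar

section SphereMoments

variable {n : ℕ} [NeZero n]

theorem toSphere_integral_coord_pow_mul_prod (i : Fin n) (m : ℕ) :
    (∫ θ : sphere (0 : EuclideanSpace ℝ (Fin n)) 1, (θ : EuclideanSpace ℝ (Fin n)) i ^ (2 * m)
        ∂volume.toSphere) * ∏ k ∈ range m, (n + 2 * k : ℝ) =
      (∏ k ∈ range m, (1 + 2 * k : ℝ)) *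
        (volume : Measure (EuclideanSpace ℝ (Fin n))).toSphere.real univ := by
  have hrad : ∀ m : ℕ, (∫ θ : sphere (0 : EuclideanSpace ℝ (Fin n)) 1,
      (θ : EuclideanSpace ℝ (Fin n)) i ^ (2 * m) ∂volume.toSphere) *
        gaussianRadialMoment (n - 1 + 2 * m) =
      (∏ k ∈ range m, (1 + 2 * k : ℝ)) * (2 * gaussianRadialMoment 0) ^ n := by
    intro m
    have hpolar := integral_homogeneous_mul_fun_norm volume
      (f := fun x : EuclideanSpace ℝ (Fin n) => x i ^ (2 * m)) (k := 2 * m)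
      (fun r x _ => by simp [mul_pow]) fun r => exp (-r ^ 2 / 2)
    have hgauss := EuclideanSpace.integral_coord_pow_mul_exp_neg_norm_sq i m
    rw [finrank_euclideanSpace_fin] at hpolar
    rw [Fintype.card_fin] at hgauss
    exact hpolar.symm.trans hgauss
  have hn : ((n - 1 : ℕ) : ℝ) + 1 = n := by
    rw [Nat.cast_sub NeZero.one_le, Nat.cast_one, sub_add_cancel]
  have h0 := hrad 0
  have hm := hrad m
  simp only [mul_zero, pow_zero, add_zero, integral_const, smul_eq_mul, mul_one, prod_range_zero,
    one_mul] at h0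
  rw [gaussianRadialMoment_add_two_mul, hn, ← h0] at hm
  refine mul_right_cancel₀ (gaussianRadialMoment_pos (n - 1)).ne' ?_
  linear_combination hm

instance : IsProbabilityMeasure (uniformSphere n) := by
  constructor
  rw [uniformSphere, Measure.smul_apply, smul_eq_mul, ENNReal.inv_mul_cancel
    (Measure.measure_univ_ne_zero.2 (Measure.toSphere_ne_zero _)) (measure_ne_top _ _)]

theorem integral_uniformSphere_coord_pow (i : Fin n) (m : ℕ) :
    ∫ θ, (θ : EuclideanSpace ℝ (Fin n)) i ^ (2 * m) ∂uniformSphere n =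
      ∏ k ∈ range m, (1 + 2 * k : ℝ) / (n + 2 * k) := by
  have hT : (volume : Measure (EuclideanSpace ℝ (Fin n))).toSphere.real univ ≠ 0 :=
    ENNReal.toReal_ne_zero.2 ⟨Measure.measure_univ_ne_zero.2 (Measure.toSphere_ne_zero _),
      measure_ne_top _ _⟩
  have hn : (0 : ℝ) < n := by exact_mod_cast Nat.pos_of_neZero n
  have hP : ∏ k ∈ range m, (n + 2 * k : ℝ) ≠ 0 :=
    prod_ne_zero_iff.2 fun k _ => by positivity
  rw [uniformSphere, integral_smul_measure, ENNReal.toReal_inv, smul_eq_mul, prod_div_distrib,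
    eq_div_iff hP, mul_assoc, toSphere_integral_coord_pow_mul_prod, ← measureReal_def]
  field_simp

theorem integral_uniformSphere_coord_pow_le (i : Fin n) (m : ℕ) :
    ∫ θ, (θ : EuclideanSpace ℝ (Fin n)) i ^ (2 * m) ∂uniformSphere n ≤ (2 * m / n : ℝ) ^ m := by
  have hn : (0 : ℝ) < n := by exact_mod_cast Nat.pos_of_neZero n
  rw [integral_uniformSphere_coord_pow]
  refine (prod_le_prod (s := range m) (g := fun _ => (2 * m / n : ℝ)) ?_ ?_).trans_eq
    (by rw [prod_const, card_range])
  · exact fun k _ => by positivity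
  intro k hk
  have hkm : (k : ℝ) + 1 ≤ m := by exact_mod_cast mem_range.1 hk
  rw [div_le_div_iff₀ (by positivity) hn]
  nlinarith

end SphereMoments

theorem measure_ge_le_ofReal_integral_pow_div {α : Type*} [MeasurableSpace α] {μ : Measure α}
    [IsFiniteMeasure μ] {X : α → ℝ} (hX : ∀ x, 0 ≤ X x) {k : ℕ}
    (hint : Integrable (fun x => X x ^ k) μ) {a : ℝ} (ha : 0 < a) :
    μ {x | a ≤ X x} ≤ ENNReal.ofReal ((∫ x, X x ^ k ∂μ) / a ^ k) := by
  have hmarkov := mul_meas_ge_le_integral_of_nonneg (.of_forall fun x => pow_nonneg (hX x) k)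
    hint (a ^ k)
  calc μ {x | a ≤ X x} ≤ μ {x | a ^ k ≤ X x ^ k} :=
        measure_mono fun x hx => pow_le_pow_left₀ ha.le hx k
    _ = ENNReal.ofReal (μ.real {x | a ^ k ≤ X x ^ k}) :=
        (ofReal_measureReal (measure_ne_top _ _)).symm
    _ ≤ _ := ENNReal.ofReal_le_ofReal <| by rwa [le_div_iff₀' (by positivity)]

section QuarticTail

variable {n : ℕ} [NeZero n]

theorem integrable_uniformSphere_of_continuous {f : sphere (0 : EuclideanSpace ℝ (Fin n)) 1 → ℝ}
    (hf : Continuous f) : Integrable f (uniformSphere n) :=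
  hf.integrable_of_hasCompactSupport (.of_compactSpace f)

theorem integral_uniformSphere_weighted_quartic_pow_le {w : Fin n → ℝ} (hw0 : ∀ j, 0 ≤ w j)
    (hw1 : ∑ j, w j = 1) (k : ℕ) :
    ∫ θ, (∑ j, w j * (θ : EuclideanSpace ℝ (Fin n)) j ^ 4) ^ k ∂uniformSphere n ≤
      (4 * k / n : ℝ) ^ (2 * k) := by
  have hint : ∀ j, Integrable (fun θ : sphere (0 : EuclideanSpace ℝ (Fin n)) 1 =>
      w j * (θ : EuclideanSpace ℝ (Fin n)) j ^ (4 * k)) (uniformSphere n) :=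
    fun j => integrable_uniformSphere_of_continuous (by fun_prop)
  calc ∫ θ, (∑ j, w j * (θ : EuclideanSpace ℝ (Fin n)) j ^ 4) ^ k ∂uniformSphere n
      ≤ ∫ θ, ∑ j, w j * (θ : EuclideanSpace ℝ (Fin n)) j ^ (4 * k) ∂uniformSphere n := by
        refine integral_mono (integrable_uniformSphere_of_continuous (by fun_prop))
          (integrable_finsetSum _ fun j _ => hint j) fun θ => ?_
        simpa only [pow_mul] using Real.pow_arith_mean_le_arith_mean_pow univ w _
          (fun j _ => hw0 j) hw1 (fun j _ => by positivity) k
    _ = ∑ j, w j * ∫ θ, (θ : EuclideanSpace ℝ (Fin n)) j ^ (2 * (2 * k)) ∂uniformSphere n := by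
        rw [integral_finsetSum _ fun j _ => hint j]
        simp only [integral_const_mul, ← mul_assoc, show 2 * 2 = 4 from rfl]
    _ ≤ ∑ j, w j * (2 * (2 * k : ℕ) / n : ℝ) ^ (2 * k) :=
        sum_le_sum fun j _ => mul_le_mul_of_nonneg_left
          (integral_uniformSphere_coord_pow_le j _) (hw0 j)
    _ = (4 * k / n : ℝ) ^ (2 * k) := by
        rw [← sum_mul, hw1, one_mul]
        push_cast
        ring

theorem uniformSphere_weighted_quartic_tail_le {w : Fin n → ℝ} (hw0 : ∀ j, 0 ≤ w j)
    (hw1 : ∑ j, w j = 1) {t : ℝ} (ht : 0 < t) (k : ℕ) :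
    uniformSphere n {θ | t / n ^ 2 ≤ ∑ j, w j * (θ : EuclideanSpace ℝ (Fin n)) j ^ 4} ≤
      ENNReal.ofReal ((16 * k ^ 2 / t) ^ k) := by
  have hn : (0 : ℝ) < n := by exact_mod_cast Nat.pos_of_neZero n
  refine (measure_ge_le_ofReal_integral_pow_div (k := k)
    (fun θ => sum_nonneg fun j _ => mul_nonneg (hw0 j) (by positivity))
    (integrable_uniformSphere_of_continuous (by fun_prop)) (by positivity)).trans
    (ENNReal.ofReal_le_ofReal ?_)
  calc _ ≤ (4 * k / n : ℝ) ^ (2 * k) / (t / n ^ 2) ^ k := by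
        gcongr
        exact integral_uniformSphere_weighted_quartic_pow_le hw0 hw1 k
    _ = (16 * k ^ 2 / t) ^ k := by
        rw [pow_mul, ← div_pow]
        congr 1
        field_simp
        ring

end QuarticTail

theorem exists_pow_le_exp_neg_sqrt {t : ℝ} (ht : 0 < t) :
    ∃ k : ℕ, (16 * k ^ 2 / t) ^ k ≤ exp 2 * exp (-(1 / 6) * √t) := by
  refine ⟨⌊√t / 12⌋₊, ?_⟩
  set k := ⌊√t / 12⌋₊
  have hk : (k : ℝ) ≤ √t / 12 := Nat.floor_le (by positivity)
  have hk' : √t / 12 < k + 1 := Nat.lt_floor_add_one _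
  have hbase : 16 * (k : ℝ) ^ 2 / t ≤ exp (-2) := by
    have hexp : exp 2 ≤ 9 := by
      rw [show (2 : ℝ) = 1 + 1 by norm_num, exp_add]
      nlinarith [exp_one_lt_d9, exp_pos 1]
    rw [div_le_iff₀ ht, exp_neg]
    calc 16 * (k : ℝ) ^ 2 ≤ 16 * (√t / 12) ^ 2 := by gcongr
      _ = t / 9 := by rw [div_pow, sq_sqrt ht.le]; ring
      _ ≤ (exp 2)⁻¹ * t := by
        rw [div_eq_inv_mul]
        gcongr
  calc (16 * (k : ℝ) ^ 2 / t) ^ k ≤ exp (-2) ^ k := by gcongr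
    _ = exp (-2 * k) := by rw [← exp_nat_mul]; ring_nf
    _ ≤ exp 2 * exp (-(1 / 6) * √t) := by
        rw [← exp_add]
        gcongr
        linarith

/-- concentration of the quartic sum `Σ δ_j⁴ Θ_j⁴` for a uniform
direction `Θ` on the sphere. -/
theorem quartic_sum_sphere_concentration :
    ∃ C₄ c₄ : ℝ, 0 < C₄ ∧ 0 < c₄ ∧
      ∀ (n : ℕ), 0 < n →
      ∀ (δ4 : Fin n → ℝ), (∀ j, 0 < δ4 j) →
      ∀ t : ℝ, 0 < t →
        uniformSphere n {θ : Metric.sphere (0 : EuclideanSpace ℝ (Fin n)) 1 |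
            t * (((∑ j, δ4 j) / n) / n) ≤ ∑ j, δ4 j * (θ.1 j) ^ 4} ≤
          ENNReal.ofReal (C₄ * Real.exp (-c₄ * Real.sqrt t)) := by
  refine ⟨exp 2, 1 / 6, exp_pos 2, by norm_num, fun n hn δ4 hδ4 t ht => ?_⟩
  have : NeZero n := ⟨hn.ne'⟩
  obtain ⟨k, hk⟩ := exists_pow_le_exp_neg_sqrt ht
  set D := ∑ j, δ4 j
  have hD : 0 < D := sum_pos (fun j _ => hδ4 j) univ_nonempty
  have hw1 : ∑ j, δ4 j / D = 1 := by rw [← sum_div, div_self hD.ne']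
  have hevent : {θ : sphere (0 : EuclideanSpace ℝ (Fin n)) 1 |
      t * ((D / n) / n) ≤ ∑ j, δ4 j * (θ.1 j) ^ 4} =
      {θ | t / n ^ 2 ≤ ∑ j, δ4 j / D * (θ.1 j) ^ 4} := by
    ext θ
    simp only [mem_ofPred_eq, div_mul_eq_mul_div _ D, ← sum_div, le_div_iff₀ hD]
    ring_nf
  rw [hevent]
  exact (uniformSphere_weighted_quartic_tail_le (fun j => div_nonneg (hδ4 j).le hD.le) hw1 ht
    k).trans (ENNReal.ofReal_le_ofReal hk)
end
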